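/- Let m, n be positive integers and P₂(ζ) = Σ_{j=1}^n ζⱼ², viewed as a polynomial on ℂⁿ. There exists C > 0 such that for all τ ∈ ℝ, η̃ ∈ ℝ and ξ ∈ ℝⁿ: |−i|η̃|^{2m−1}η̃ + P₂^m(ξ − iτeₙ)|² + τ² |(∂ₙ P₂^m)(ξ − iτeₙ)|² + τ^{2m} |(∂ₙ^m P₂^m)(ξ − iτeₙ)|² ≥ C ( |η̃|^{4m} + |ξ − iτeₙ|^{4m} ). -/

import Mathlib

/-!
Both sides are continuous and positively homogeneous of degree `4m` in `(τ, η, ξ)`, so by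
compactness of the unit sphere it suffices that the left side vanishes only at the origin.
Write `z = ξ - iτeₙ`. If `τ = 0`, then `P₂^m(z) = |ξ|^{2m}` is real, and the first term forces
`|ξ|^{2m} = 0` and `|η|^{2m-1}η = 0`. If `τ ≠ 0`, then `zₙ ≠ 0`, and `∂ₙP₂^m = 2m Xₙ P₂^{m-1}`
forces `P₂(z) = 0`; but modulo `P₂` the derivative `∂ₙ^m P₂^m` is a nonzero multiple of `Xₙ^m`,
so the third term does not vanish.
-/

noncomputable section

/-- The polynomial `P₂(ζ) = Σⱼ ζⱼ²`. -/
def P₂ (n : ℕ) : MvPolynomial (Fin n) ℂ := ∑ j, MvPolynomial.X j ^ 2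

/-- The last coordinate index of `Fin n`. -/
def lastI (n : ℕ) (hn : 0 < n) : Fin n := ⟨n - 1, Nat.sub_lt hn one_pos⟩

/-- The complex point `ξ − iτeₙ ∈ ℂⁿ`. -/
def evalPt {n : ℕ} (hn : 0 < n) (ξ : Fin n → ℝ) (τ : ℝ) : Fin n → ℂ :=
  fun j => (ξ j : ℂ) - if j = lastI n hn then Complex.I * (τ : ℂ) else 0

end

theorem exists_pos_mul_le_of_homogeneous {E : Type*} [NormedAddCommGroup E] [NormedSpace ℝ E]
    [FiniteDimensional ℝ E] {F G : E → ℝ} {k : ℕ} (hk : k ≠ 0)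
    (hF : Continuous F) (hG : Continuous G)
    (hFk : ∀ t : ℝ, 0 < t → ∀ x, F (t • x) = t ^ k * F x)
    (hGk : ∀ t : ℝ, 0 < t → ∀ x, G (t • x) = t ^ k * G x)
    (hpos : ∀ x, x ≠ 0 → 0 < F x) :
    ∃ C > 0, ∀ x, C * G x ≤ F x := by
  have hS : IsCompact (Metric.sphere (0 : E) 1) := isCompact_sphere 0 1
  obtain ⟨c, hc, hcF⟩ := hS.exists_forall_le' hF.continuousOn (a := 0)
    fun x hx => hpos x (ne_zero_of_mem_unit_sphere ⟨x, hx⟩)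
  obtain ⟨M, hM⟩ := hS.exists_bound_of_continuousOn hG.continuousOn
  refine ⟨c / max M 1, by positivity, fun x => ?_⟩
  rcases eq_or_ne x 0 with rfl | hx
  · have hzero (H : E → ℝ) (hH : ∀ t : ℝ, 0 < t → ∀ x, H (t • x) = t ^ k * H x) : H 0 = 0 := by
      have h2 := hH 2 two_pos 0
      rw [smul_zero] at h2
      have : (1 : ℝ) < 2 ^ k := one_lt_pow₀ one_lt_two hk
      nlinarith
    rw [hzero F hFk, hzero G hGk, mul_zero]
  · have hu : ‖x‖⁻¹ • x ∈ Metric.sphere (0 : E) 1 := by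
      simp [norm_smul, hx]
    have hxu : x = ‖x‖ • ‖x‖⁻¹ • x := by
      rw [smul_smul, mul_inv_cancel₀ (norm_ne_zero_iff.mpr hx), one_smul]
    have hGu : c / max M 1 * G (‖x‖⁻¹ • x) ≤ F (‖x‖⁻¹ • x) :=
      calc c / max M 1 * G (‖x‖⁻¹ • x) ≤ c / max M 1 * max M 1 := by
            gcongr
            exact (le_abs_self _).trans ((hM _ hu).trans (le_max_left _ _))
        _ = c := div_mul_cancel₀ _ (by positivity)
        _ ≤ F (‖x‖⁻¹ • x) := hcF _ hu
    rw [hxu, hFk _ (norm_pos_iff.mpr hx), hGk _ (norm_pos_iff.mpr hx), mul_left_comm]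
    gcongr

theorem Complex.norm_sq_ofReal_pow_mul {t : ℝ} (ht : 0 ≤ t) (d : ℕ) (w : ℂ) :
    ‖(t : ℂ) ^ d * w‖ ^ 2 = t ^ (2 * d) * ‖w‖ ^ 2 := by
  rw [norm_mul, norm_pow, Complex.norm_real, Real.norm_of_nonneg ht, mul_pow, ← pow_mul,
    mul_comm d]

namespace MvPolynomial

variable {σ R : Type*} [CommSemiring R] {φ : MvPolynomial σ R} {d : ℕ}

theorem IsHomogeneous.eval_smul (h : φ.IsHomogeneous d) (c : R) (x : σ → R) :
    eval (c • x) φ = c ^ d * eval x φ := by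
  rw [eval_eq, eval_eq, Finset.mul_sum]
  refine Finset.sum_congr rfl fun v hv => ?_
  have hd : ∑ i ∈ v.support, v i = d := by
    rw [← h (mem_support_iff.mp hv), Finsupp.weight_apply, Finsupp.sum]
    simp
  simp only [Pi.smul_apply, smul_eq_mul, mul_pow, Finset.prod_mul_distrib,
    Finset.prod_pow_eq_pow_sum, hd]
  ring

theorem IsHomogeneous.iterate_pderiv (h : φ.IsHomogeneous d) (i : σ) (k : ℕ) :
    ((pderiv i)^[k] φ).IsHomogeneous (d - k) := by
  induction k with
  | zero => exact h
  | succ k ih => simpa [Function.iterate_succ_apply', Nat.sub_sub] using ih.pderiv (i := i)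

end MvPolynomial

open MvPolynomial

section P₂

variable {n : ℕ}

theorem eval_P₂ (z : Fin n → ℂ) : eval z (P₂ n) = ∑ j, z j ^ 2 := by
  simp [P₂]

theorem isHomogeneous_P₂ (n : ℕ) : (P₂ n).IsHomogeneous 2 :=
  IsHomogeneous.sum _ _ _ fun j _ => isHomogeneous_X_pow j 2

theorem pderiv_P₂ (i : Fin n) : pderiv i (P₂ n) = 2 * X i := by
  classical
  rw [P₂, map_sum, Finset.sum_eq_single i]
  · rw [pderiv_pow, pderiv_X_self]; ring
  · intro j _ hj
    rw [pderiv_pow, pderiv_X_of_ne hj]; ring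
  · simp

theorem pderiv_P₂_pow (i : Fin n) (m : ℕ) :
    pderiv i (P₂ n ^ m) = (m : MvPolynomial (Fin n) ℂ) * P₂ n ^ (m - 1) * (2 * X i) := by
  rw [pderiv_pow, pderiv_P₂]

theorem iterate_pderiv_P₂_pow (i : Fin n) (k a : ℕ) :
    ∃ (c : ℕ) (Q : MvPolynomial (Fin n) ℂ), c ≠ 0 ∧
      (pderiv i)^[k] (P₂ n ^ (k + a)) = C (c : ℂ) * X i ^ k * P₂ n ^ a + P₂ n ^ (a + 1) * Q := by
  induction k generalizing a with
  | zero => exact ⟨1, 0, one_ne_zero, by simp⟩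
  | succ k ih =>
    obtain ⟨c, Q, hc, hQ⟩ := ih (a + 1)
    refine ⟨2 * (a + 1) * c, C (c : ℂ) * pderiv i (X i ^ k) +
      C ((2 * (a + 2) : ℕ) : ℂ) * (X i * Q) + P₂ n * pderiv i Q, by positivity, ?_⟩
    rw [show k + 1 + a = k + (a + 1) by ring, Function.iterate_succ_apply', hQ]
    simp only [map_add, pderiv_mul, pderiv_pow, pderiv_P₂, Nat.add_sub_cancel,
      Derivation.map_natCast, map_natCast]
    push_cast
    ring

end P₂

section evalPt

variable {n : ℕ} (hn : 0 < n)

theorem evalPt_smul (ξ : Fin n → ℝ) (τ t : ℝ) :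
    evalPt hn (t • ξ) (t * τ) = (t : ℂ) • evalPt hn ξ τ := by
  funext j
  simp only [evalPt, Pi.smul_apply, smul_eq_mul]
  split_ifs <;> push_cast <;> ring

theorem evalPt_zero_right (ξ : Fin n → ℝ) : evalPt hn ξ 0 = fun j => (ξ j : ℂ) := by
  funext j
  simp [evalPt]

theorem evalPt_lastI_ne_zero (ξ : Fin n → ℝ) {τ : ℝ} (hτ : τ ≠ 0) :
    evalPt hn ξ τ (lastI n hn) ≠ 0 := fun h => hτ <| by
  simpa [evalPt] using congrArg Complex.im h

theorem continuous_evalPt : Continuous fun p : ℝ × ℝ × (Fin n → ℝ) => evalPt hn p.2.2 p.1 := by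
  refine continuous_pi fun j => ?_
  simp only [evalPt]
  split_ifs <;> fun_prop

end evalPt

noncomputable def symbolNormSq (m n : ℕ) (hn : 0 < n) (τ η : ℝ) (ξ : Fin n → ℝ) : ℝ :=
  ‖-Complex.I * ((|η| ^ (2 * m - 1) * η : ℝ) : ℂ) + eval (evalPt hn ξ τ) (P₂ n ^ m)‖ ^ 2 +
    τ ^ 2 * ‖eval (evalPt hn ξ τ) (pderiv (lastI n hn) (P₂ n ^ m))‖ ^ 2 +
    τ ^ (2 * m) * ‖eval (evalPt hn ξ τ) ((fun Q => pderiv (lastI n hn) Q)^[m] (P₂ n ^ m))‖ ^ 2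

def symbolWeight (m n : ℕ) (τ η : ℝ) (ξ : Fin n → ℝ) : ℝ :=
  |η| ^ (4 * m) + ((∑ j, ξ j ^ 2) + τ ^ 2) ^ (2 * m)

section Symbol

variable {m n : ℕ} (hn : 0 < n)

theorem continuous_symbolNormSq :
    Continuous fun p : ℝ × ℝ × (Fin n → ℝ) => symbolNormSq m n hn p.1 p.2.1 p.2.2 := by
  have hev (φ : MvPolynomial (Fin n) ℂ) :
      Continuous fun p : ℝ × ℝ × (Fin n → ℝ) => eval (evalPt hn p.2.2 p.1) φ :=
    continuous_eval φ |>.comp (continuous_evalPt hn)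
  have := hev (P₂ n ^ m)
  have := hev (pderiv (lastI n hn) (P₂ n ^ m))
  have := hev ((fun Q => pderiv (lastI n hn) Q)^[m] (P₂ n ^ m))
  unfold symbolNormSq
  fun_prop

theorem symbolNormSq_nonneg (τ η : ℝ) (ξ : Fin n → ℝ) : 0 ≤ symbolNormSq m n hn τ η ξ := by
  have : 0 ≤ τ ^ (2 * m) := by rw [pow_mul]; positivity
  unfold symbolNormSq
  positivity

theorem symbolNormSq_smul (hm : 0 < m) {t : ℝ} (ht : 0 < t) (τ η : ℝ) (ξ : Fin n → ℝ) :
    symbolNormSq m n hn (t * τ) (t * η) (t • ξ) = t ^ (4 * m) * symbolNormSq m n hn τ η ξ := by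
  obtain ⟨m, rfl⟩ : ∃ k, m = k + 1 := Nat.exists_eq_add_one.mpr hm
  set i := lastI n hn
  have h₀ : (P₂ n ^ (m + 1)).IsHomogeneous (2 * (m + 1)) := (isHomogeneous_P₂ n).pow _
  have h₁ : (pderiv i (P₂ n ^ (m + 1))).IsHomogeneous (2 * m + 1) := by
    simpa [Nat.mul_succ] using h₀.pderiv (i := i)
  have h₂ : ((fun Q => pderiv i Q)^[m + 1] (P₂ n ^ (m + 1))).IsHomogeneous (m + 1) := by
    simpa [show 2 * (m + 1) - (m + 1) = m + 1 by omega] using h₀.iterate_pderiv i (m + 1)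
  have hη (w : ℂ) : -Complex.I * ((|t * η| ^ (2 * m + 1) * (t * η) : ℝ) : ℂ) +
      (t : ℂ) ^ (2 * (m + 1)) * w
      = (t : ℂ) ^ (2 * (m + 1)) * (-Complex.I * ((|η| ^ (2 * m + 1) * η : ℝ) : ℂ) + w) := by
    rw [abs_mul, abs_of_pos ht]; push_cast; ring
  simp only [symbolNormSq, show 2 * (m + 1) - 1 = 2 * m + 1 by omega, evalPt_smul]
  rw [h₀.eval_smul, h₁.eval_smul, h₂.eval_smul, hη, Complex.norm_sq_ofReal_pow_mul ht.le,
    Complex.norm_sq_ofReal_pow_mul ht.le, Complex.norm_sq_ofReal_pow_mul ht.le]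
  ring

theorem eq_zero_of_symbolNormSq_eq_zero (hm : 0 < m) {τ η : ℝ} {ξ : Fin n → ℝ}
    (h : symbolNormSq m n hn τ η ξ = 0) : τ = 0 ∧ η = 0 ∧ ξ = 0 := by
  have hτm : 0 ≤ τ ^ (2 * m) := by rw [pow_mul]; positivity
  unfold symbolNormSq at h
  rw [add_eq_zero_iff_of_nonneg (by positivity) (mul_nonneg hτm (by positivity)),
    add_eq_zero_iff_of_nonneg (by positivity) (by positivity)] at h
  simp only [mul_eq_zero, ne_eq, OfNat.ofNat_ne_zero, not_false_eq_true, pow_eq_zero_iff,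
    norm_eq_zero] at h
  obtain ⟨⟨h₀, h₁⟩, h₂⟩ := h
  set z := evalPt hn ξ τ
  set i := lastI n hn
  rcases eq_or_ne τ 0 with rfl | hτ
  · have hz : eval z (P₂ n) = ((∑ j, ξ j ^ 2 : ℝ) : ℂ) := by
      simp [z, evalPt_zero_right, eval_P₂]
    rw [map_pow, hz] at h₀
    set a := |η| ^ (2 * m - 1) * η
    set S := ∑ j, ξ j ^ 2
    rw [← Complex.ofReal_pow] at h₀
    simp only [Complex.ext_iff, Complex.add_re, Complex.add_im, Complex.mul_re, Complex.mul_im,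
      Complex.neg_re, Complex.neg_im, Complex.I_re, Complex.I_im, Complex.ofReal_re,
      Complex.ofReal_im, Complex.zero_re, Complex.zero_im] at h₀
    have ha : a = 0 := by linarith [h₀.2]
    have hS : S = 0 := pow_eq_zero_iff hm.ne' |>.mp (by linarith [h₀.1])
    refine ⟨rfl, by simp only [a, mul_eq_zero, pow_eq_zero_iff', abs_eq_zero] at ha; tauto, funext fun j => ?_⟩
    rw [Finset.sum_eq_zero_iff_of_nonneg fun j _ => sq_nonneg (ξ j)] at hS
    simpa using hS j (Finset.mem_univ j)
  · have hzi : z i ≠ 0 := evalPt_lastI_ne_zero hn ξ hτ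
    obtain ⟨he, -⟩ : eval z (P₂ n) = 0 ∧ m - 1 ≠ 0 := by
      simpa [pderiv_P₂, hzi, hm.ne'] using h₁.resolve_left hτ
    obtain ⟨c, Q, hc, hQ⟩ := iterate_pderiv_P₂_pow i m 0
    rw [add_zero] at hQ
    simp [hQ, he, hτ, hc, hzi] at h₂

theorem symbolNormSq_pos (hm : 0 < m) {τ η : ℝ} {ξ : Fin n → ℝ} (h : (τ, η, ξ) ≠ 0) :
    0 < symbolNormSq m n hn τ η ξ := by
  refine (symbolNormSq_nonneg hn τ η ξ).lt_of_ne' fun h0 => h ?_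
  obtain ⟨rfl, rfl, rfl⟩ := eq_zero_of_symbolNormSq_eq_zero hn hm h0
  rfl

end Symbol

theorem symbolWeight_smul (m : ℕ) {n : ℕ} {t : ℝ} (ht : 0 < t) (τ η : ℝ) (ξ : Fin n → ℝ) :
    symbolWeight m n (t * τ) (t * η) (t • ξ) = t ^ (4 * m) * symbolWeight m n τ η ξ := by
  have hsum : ∑ j, (t • ξ) j ^ 2 = t ^ 2 * ∑ j, ξ j ^ 2 := by
    simp [Finset.mul_sum, mul_pow]
  rw [symbolWeight, symbolWeight, hsum, abs_mul, abs_of_pos ht,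
    show t ^ 2 * ∑ j, ξ j ^ 2 + (t * τ) ^ 2 = t ^ 2 * ((∑ j, ξ j ^ 2) + τ ^ 2) by ring,
    mul_pow, mul_pow, ← pow_mul]
  ring

/-- The homogeneous symbol estimate (3.9), after the substitution
`η = |η̃|^{2m−1}η̃`. -/
theorem symbol_lower_bound_homogeneous
    (m n : ℕ) (hm : 0 < m) (hn : 0 < n) :
    ∃ C > (0 : ℝ), ∀ (τ η : ℝ) (ξ : Fin n → ℝ),
      ‖-Complex.I * ((|η| ^ (2 * m - 1) * η : ℝ) : ℂ) +
          MvPolynomial.eval (evalPt hn ξ τ) (P₂ n ^ m)‖ ^ 2 +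
        τ ^ 2 * ‖MvPolynomial.eval (evalPt hn ξ τ)
          (MvPolynomial.pderiv (lastI n hn) (P₂ n ^ m))‖ ^ 2 +
        τ ^ (2 * m) * ‖MvPolynomial.eval (evalPt hn ξ τ)
          ((fun Q => MvPolynomial.pderiv (lastI n hn) Q)^[m] (P₂ n ^ m))‖ ^ 2 ≥
      C * (|η| ^ (4 * m) + ((∑ j, ξ j ^ 2) + τ ^ 2) ^ (2 * m)) := by
  obtain ⟨C, hC, hle⟩ := exists_pos_mul_le_of_homogeneous (E := ℝ × ℝ × (Fin n → ℝ))
    (F := fun p => symbolNormSq m n hn p.1 p.2.1 p.2.2)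
    (G := fun p => symbolWeight m n p.1 p.2.1 p.2.2) (by omega : 4 * m ≠ 0)
    (continuous_symbolNormSq hn) (by unfold symbolWeight; fun_prop)
    (fun t ht p => symbolNormSq_smul hn hm ht p.1 p.2.1 p.2.2)
    (fun t ht p => symbolWeight_smul m ht p.1 p.2.1 p.2.2)
    (fun _ hp => symbolNormSq_pos hn hm hp)
  exact ⟨C, hC, fun τ η ξ => hle (τ, η, ξ)⟩
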